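/- arXiv:1602.08330 — 2 statements merged into one kernel-verified Lean document; each statement's English description precedes it below -/
import Mathlib

section
/- Distinctness of quadric invariants: suppose μ₁,...,μ_p and their inverses μ₁⁻¹,...,μ_p⁻¹ are 2p distinct complex numbers, where for elliptic indices e the number μ_e > 1 is real, for hyperbolic indices h we have |μ_h| = 1 with arg λ_h ∈ (0, π/2) for λ_h² = μ_h, and for complex indices s, |μ_s| > 1 with arg λ_s ∈ (0, π/2). Define γ_j via γ_j = 1/(λ_j + λ_j⁻¹) for j = e, h (with λ_e > 1 real, |λ_h| = 1), and γ_s by γ_s⁻¹ = 1 + conj(λ_s)², γ_{s+s_*} = 1 − conj(γ_s). Then the p numbers γ_e², γ_h², conj(γ_s)·γ_{s+s_*}, γ_s·conj(γ_{s+s_*}) are pairwise distinct. -/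
open Complex ComplexConjugate

/-!
Every invariant `G_i` equals `μ_i / (1 + μ_i)²`: for `j = e, h` because
`(λ + λ⁻¹)⁻¹ = λ / (1 + λ²)`, for the complex pairs because `γ (1 - γ) = μ / (1 + μ)²` when
`γ = (1 + μ)⁻¹`, together with `μ_{s+s_*} = conj(μ_s)⁻¹` and the invariance of
`μ / (1 + μ)²` under `μ ↦ μ⁻¹`. Finally `a / (1 + a)² = b / (1 + b)²` forces
`(a - b)(1 - ab) = 0`, i.e. `a = b` or `a = b⁻¹`, which the hypotheses on the `μ_i` exclude.
-/

section Field

variable {K : Type*} [Field K]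

theorem sq_inv_add_inv (x : K) : (x + x⁻¹)⁻¹ ^ 2 = x ^ 2 / (1 + x ^ 2) ^ 2 := by
  rcases eq_or_ne x 0 with rfl | hx
  · simp
  rw [show x + x⁻¹ = (1 + x ^ 2) / x by field_simp; ring, inv_div, div_pow]

theorem inv_one_add_mul_one_sub_inv_one_add (m : K) :
    (1 + m)⁻¹ * (1 - (1 + m)⁻¹) = m / (1 + m) ^ 2 := by
  rcases eq_or_ne (1 + m) 0 with hm | hm
  · simp [hm]
  field_simp
  ring

theorem inv_div_one_add_inv_sq (x : K) : x⁻¹ / (1 + x⁻¹) ^ 2 = x / (1 + x) ^ 2 := by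
  rcases eq_or_ne x 0 with rfl | hx
  · simp
  rw [show 1 + x⁻¹ = (1 + x) / x by field_simp; ring, div_pow, div_div_eq_mul_div,
    inv_mul_eq_div, sq, mul_div_cancel_right₀ x hx]

theorem eq_of_div_one_add_sq_eq {a b : K} (ha : a ≠ a⁻¹) (hb : b ≠ b⁻¹) (hab : a ≠ b⁻¹)
    (h : a / (1 + a) ^ 2 = b / (1 + b) ^ 2) : a = b := by
  have one_add_ne_zero {x : K} (hx : x ≠ x⁻¹) : 1 + x ≠ 0 := by
    intro h0
    rw [eq_neg_of_add_eq_zero_right h0, inv_neg, inv_one] at hx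
    exact hx rfl
  rw [div_eq_div_iff (pow_ne_zero 2 (one_add_ne_zero ha)) (pow_ne_zero 2 (one_add_ne_zero hb))]
    at h
  have hfactor : (a - b) * (1 - a * b) = 0 := by linear_combination h
  rcases mul_eq_zero.mp hfactor with hab' | hab'
  · exact sub_eq_zero.mp hab'
  · exact absurd (eq_inv_of_mul_eq_one_left (by linear_combination -hab')) hab

end Field

theorem stmt_12_general (e h s p : ℕ) (hp : p = e + h + 2 * s)
    (lam mu gam G : ℕ → ℂ)
    (hmulam : ∀ i < p, mu i = (lam i) ^ 2)
    -- the 2p numbers μ_i, μ_i⁻¹ are distinct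
    (hmu_inj : ∀ i < p, ∀ j < p, mu i = mu j → i = j)
    (hmu_inv : ∀ i < p, ∀ j < p, mu i ≠ (mu j)⁻¹)
    -- complex: |λ_s| > 1 (so |μ_s| > 1), arg λ_s ∈ (0, π/2), λ_{s+s_*} = conj(λ_s)⁻¹
    (hcpl : ∀ i, e + h ≤ i → i < e + h + s →
      1 < ‖lam i‖ ∧ 0 < (lam i).arg ∧ (lam i).arg < Real.pi / 2 ∧
      lam (i + s) = ((starRingEnd ℂ) (lam i))⁻¹)
    -- γ_j = 1/(λ_j + λ_j⁻¹) for elliptic and hyperbolic indices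
    (hgam_eh : ∀ i < e + h, gam i = (lam i + (lam i)⁻¹)⁻¹)
    -- γ_s⁻¹ = 1 + conj(λ_s)², γ_{s+s_*} = 1 − conj(γ_s)
    (hgam_s : ∀ i, e + h ≤ i → i < e + h + s →
      gam i = (1 + ((starRingEnd ℂ) (lam i)) ^ 2)⁻¹ ∧
      gam (i + s) = 1 - (starRingEnd ℂ) (gam i))
    -- the p invariants
    (hG_eh : ∀ i < e + h, G i = (gam i) ^ 2)
    (hG_s : ∀ i, e + h ≤ i → i < e + h + s →
      G i = (starRingEnd ℂ) (gam i) * gam (i + s) ∧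
      G (i + s) = gam i * (starRingEnd ℂ) (gam (i + s))) :
    ∀ i < p, ∀ j < p, G i = G j → i = j := by
  have hG : ∀ i < p, G i = mu i / (1 + mu i) ^ 2 := by
    intro i hi
    rcases lt_or_ge i (e + h) with hieh | hieh
    · rw [hG_eh i hieh, hgam_eh i hieh, hmulam i hi, sq_inv_add_inv]
    rcases lt_or_ge i (e + h + s) with his | his
    · obtain ⟨hgam, hgam'⟩ := hgam_s i hieh his
      have hconj : conj (gam i) = (1 + mu i)⁻¹ := by simp [hgam, hmulam i hi]
      rw [(hG_s i hieh his).1, hgam', hconj, inv_one_add_mul_one_sub_inv_one_add]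
    · obtain ⟨k, hk, hks, rfl⟩ : ∃ k, e + h ≤ k ∧ k < e + h + s ∧ k + s = i :=
        ⟨i - s, by omega, by omega, by omega⟩
      have hkp : k < p := by omega
      obtain ⟨hgam, hgam'⟩ := hgam_s k hk hks
      have hmu : mu (k + s) = (conj (mu k))⁻¹ := by
        rw [hmulam _ hi, (hcpl k hk hks).2.2.2, hmulam k hkp, map_pow, inv_pow]
      have hgamk : gam k = (1 + conj (mu k))⁻¹ := by rw [hgam, hmulam k hkp, map_pow]
      have hconj : conj (gam (k + s)) = 1 - gam k := by simp [hgam']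
      rw [(hG_s k hk hks).2, hconj, hgamk, inv_one_add_mul_one_sub_inv_one_add, hmu,
        inv_div_one_add_inv_sq]
  intro i hi j hj hGij
  refine hmu_inj i hi j hj
    (eq_of_div_one_add_sq_eq (hmu_inv i hi i hi) (hmu_inv j hj j hj) (hmu_inv i hi j hj) ?_)
  rwa [← hG i hi, ← hG j hj]

/-- Distinctness of quadric invariants: with `e` elliptic, `h` hyperbolic indices and
`s` complex index-pairs (`p = e + h + 2s`), if the `2p` eigenvalues
`μ₁,...,μ_p, μ₁⁻¹,...,μ_p⁻¹` are distinct, then the `p` numbers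
`γ_e², γ_h², conj(γ_s)·γ_{s+s_*}, γ_s·conj(γ_{s+s_*})` are pairwise distinct. -/
theorem stmt_12 (e h s p : ℕ) (hp : p = e + h + 2 * s)
    (lam mu gam G : ℕ → ℂ)
    (hmulam : ∀ i < p, mu i = (lam i) ^ 2)
    -- the 2p numbers μ_i, μ_i⁻¹ are distinct
    (hmu_inj : ∀ i < p, ∀ j < p, mu i = mu j → i = j)
    (hmu_inv : ∀ i < p, ∀ j < p, mu i ≠ (mu j)⁻¹)
    -- elliptic: λ_e real, λ_e > 1 (so μ_e > 1 is real)
    (hell : ∀ i < e, (lam i).im = 0 ∧ 1 < (lam i).re)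
    -- hyperbolic: |λ_h| = 1 (so |μ_h| = 1), arg λ_h ∈ (0, π/2)
    (hhyp : ∀ i, e ≤ i → i < e + h →
      ‖lam i‖ = 1 ∧ 0 < (lam i).arg ∧ (lam i).arg < Real.pi / 2)
    -- complex: |λ_s| > 1 (so |μ_s| > 1), arg λ_s ∈ (0, π/2), λ_{s+s_*} = conj(λ_s)⁻¹
    (hcpl : ∀ i, e + h ≤ i → i < e + h + s →
      1 < ‖lam i‖ ∧ 0 < (lam i).arg ∧ (lam i).arg < Real.pi / 2 ∧
      lam (i + s) = ((starRingEnd ℂ) (lam i))⁻¹)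
    -- γ_j = 1/(λ_j + λ_j⁻¹) for elliptic and hyperbolic indices
    (hgam_eh : ∀ i < e + h, gam i = (lam i + (lam i)⁻¹)⁻¹)
    -- γ_s⁻¹ = 1 + conj(λ_s)², γ_{s+s_*} = 1 − conj(γ_s)
    (hgam_s : ∀ i, e + h ≤ i → i < e + h + s →
      gam i = (1 + ((starRingEnd ℂ) (lam i)) ^ 2)⁻¹ ∧
      gam (i + s) = 1 - (starRingEnd ℂ) (gam i))
    -- the p invariants
    (hG_eh : ∀ i < e + h, G i = (gam i) ^ 2)
    (hG_s : ∀ i, e + h ≤ i → i < e + h + s →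
      G i = (starRingEnd ℂ) (gam i) * gam (i + s) ∧
      G (i + s) = gam i * (starRingEnd ℂ) (gam (i + s))) :
    ∀ i < p, ∀ j < p, G i = G j → i = j :=
  stmt_12_general e h s p hp lam mu gam G hmulam hmu_inj hmu_inv hcpl hgam_eh hgam_s hG_eh hG_s
end

section
/- Majorant fixed point: let f be a convergent power series map in n variables with f(0) = 0 and Df(0) = 0, and let f_sym majorize f with nonnegative coefficients. Then the equation u = C·f_sym(I_sym + u), u(0) = 0, has a unique solution u given by a convergent power series, by the implicit function theorem. -/
/-!
The map `Ψ (z, w) = (z, w - g (z, w))` turns the fixed-point equation `w = g (z, w)` into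
`Ψ (z, w) = (z, 0)`. When `g 0 = 0` and `Dg 0 = 0`, `Ψ` fixes `0` with derivative the identity
there, so the inverse function theorem gives a local inverse `Φ`, analytic because `Ψ` is, and
`u z = (Φ (z, 0)).2` solves the equation. Any solution `v` continuous at `0` with `v 0 = 0` has
`(z, v z)` near `0`, where `Ψ` is injective, so `v = u` near `0`. The equation
`u = C • f (z + u)` is the case `g (z, w) = C • f (z + w)`.
-/

open Filter Topology

theorem HasStrictFDerivAt.analyticAt_localInverse {𝕜 E F : Type*} [NontriviallyNormedField 𝕜]
    [NormedAddCommGroup E] [NormedSpace 𝕜 E] [CompleteSpace E]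
    [NormedAddCommGroup F] [NormedSpace 𝕜 F] {f : E → F} {f' : E ≃L[𝕜] F} {a : E}
    (hf : HasStrictFDerivAt f (f' : E →L[𝕜] F) a) (ha : AnalyticAt 𝕜 f a) :
    AnalyticAt 𝕜 (hf.localInverse f f' a) (f a) :=
  (hf.toOpenPartialHomeomorph f).analyticAt_symm' hf.mem_toOpenPartialHomeomorph_source ha
    hf.hasFDerivAt.fderiv

section FixedPoint

def fixedPointStraightening {E F : Type*} [Sub F] (g : E × F → F) (p : E × F) : E × F :=
  (p.1, p.2 - g p)

theorem fixedPointStraightening_eq_mk_zero_iff {E F : Type*} [AddGroup F] {g : E × F → F}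
    {p : E × F} {z : E} : fixedPointStraightening g p = (z, 0) ↔ p.1 = z ∧ p.2 = g p := by
  simp [fixedPointStraightening, sub_eq_zero]

variable {𝕜 : Type*} [NontriviallyNormedField 𝕜]
  {E : Type*} [NormedAddCommGroup E] [NormedSpace 𝕜 E]
  {F : Type*} [NormedAddCommGroup F] [NormedSpace 𝕜 F] {g : E × F → F}

theorem hasStrictFDerivAt_fixedPointStraightening {p : E × F}
    (hg : HasStrictFDerivAt g (0 : E × F →L[𝕜] F) p) :
    HasStrictFDerivAt (fixedPointStraightening g)
      ((ContinuousLinearEquiv.refl 𝕜 (E × F) : (E × F) ≃L[𝕜] E × F) : (E × F) →L[𝕜] E × F) p := by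
  have := hasStrictFDerivAt_fst.prodMk (hasStrictFDerivAt_snd.sub hg)
  rw [sub_zero, ContinuousLinearMap.fst_prod_snd] at this
  exact this

theorem analyticAt_fixedPointStraightening {p : E × F} (hg : AnalyticAt 𝕜 g p) :
    AnalyticAt 𝕜 (fixedPointStraightening g) p :=
  analyticAt_fst.prod (analyticAt_snd.sub hg)

theorem exists_analyticAt_implicit_fixedPoint [CompleteSpace E] [CompleteSpace F]
    (hg : AnalyticAt 𝕜 g 0) (hg0 : g 0 = 0) (hdg : fderiv 𝕜 g 0 = 0) :
    ∃ u : E → F, AnalyticAt 𝕜 u 0 ∧ u 0 = 0 ∧ (∀ᶠ z in 𝓝 0, u z = g (z, u z)) ∧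
      ∀ v : E → F, ContinuousAt v 0 → v 0 = 0 →
        (∀ᶠ z in 𝓝 0, v z = g (z, v z)) → v =ᶠ[𝓝 0] u := by
  have hΨ := hasStrictFDerivAt_fixedPointStraightening (hdg ▸ hg.hasStrictFDerivAt)
  have hΨ0 : fixedPointStraightening g 0 = 0 := by simp [fixedPointStraightening, hg0]
  have hΦ := hΨ.analyticAt_localInverse (analyticAt_fixedPointStraightening hg)
  have hΦ0 := hΨ.localInverse_apply_image
  rw [hΨ0] at hΦ hΦ0
  refine ⟨fun z ↦ (hΨ.localInverse _ _ _ (z, 0)).2, ?_, congrArg Prod.snd hΦ0, ?_, ?_⟩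
  · exact analyticAt_snd.comp (hΦ.comp_of_eq (analyticAt_id.prod analyticAt_const) rfl)
  · have hz : Tendsto (fun z : E ↦ ((z, 0) : E × F)) (𝓝 0) (𝓝 (fixedPointStraightening g 0)) := by
      rw [hΨ0]; exact (continuous_id.prodMk continuous_const).tendsto' 0 0 rfl
    filter_upwards [hz.eventually hΨ.eventually_right_inverse] with z hz
    obtain ⟨hfst, hsnd⟩ := fixedPointStraightening_eq_mk_zero_iff.mp hz
    exact hsnd.trans (congrArg g (Prod.ext hfst rfl))
  · intro v hv hv0 hvg
    have hz : Tendsto (fun z : E ↦ ((z, v z) : E × F)) (𝓝 0) (𝓝 0) :=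
      (continuousAt_id.prodMk hv).tendsto.trans_eq (by simp [hv0])
    filter_upwards [hz.eventually hΨ.eventually_left_inverse, hvg] with z hz hvz
    rw [fixedPointStraightening_eq_mk_zero_iff.mpr ⟨rfl, hvz⟩] at hz
    exact (congrArg Prod.snd hz).symm

end FixedPoint

theorem stmt_18_general (n : ℕ) (fsym : (Fin n → ℂ) → (Fin n → ℂ))
    (hf : AnalyticAt ℂ fsym 0) (hf0 : fsym 0 = 0)
    (hdf : fderiv ℂ fsym 0 = 0) (C : ℝ) :
    ∃ u : (Fin n → ℂ) → (Fin n → ℂ),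
      AnalyticAt ℂ u 0 ∧ u 0 = 0 ∧
      (∀ᶠ z in nhds 0, u z = C • fsym (z + u z)) ∧
      ∀ v : (Fin n → ℂ) → (Fin n → ℂ), ContinuousAt v 0 → v 0 = 0 →
        (∀ᶠ z in nhds 0, v z = C • fsym (z + v z)) → v =ᶠ[nhds 0] u := by
  let add := ContinuousLinearMap.fst ℂ (Fin n → ℂ) (Fin n → ℂ) + .snd ℂ (Fin n → ℂ) (Fin n → ℂ)
  have hfsym : HasFDerivAt fsym (0 : (Fin n → ℂ) →L[ℂ] Fin n → ℂ) (add 0) := by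
    simpa [hdf] using hf.differentiableAt.hasFDerivAt
  have hderiv : fderiv ℂ (fun p ↦ C • fsym (add p)) 0 = 0 := by
    simpa using ((hfsym.comp 0 add.hasFDerivAt).fun_const_smul C).fderiv
  have hg : AnalyticAt ℂ (fun p ↦ C • fsym (add p)) 0 :=
    (hf.comp_of_eq (add.analyticAt 0) (by simp)).fun_const_smul
  exact exists_analyticAt_implicit_fixedPoint hg (by simp [hf0]) hderiv

/-- Majorant fixed point: for `fsym` analytic at `0` with `fsym 0 = 0` and vanishing
derivative at `0`, and `C > 0`, the equation `u = C·fsym(I + u)`, `u(0) = 0`, has a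
unique solution `u`, given by a convergent power series. -/
theorem stmt_18 (n : ℕ) (fsym : (Fin n → ℂ) → (Fin n → ℂ))
    (hf : AnalyticAt ℂ fsym 0) (hf0 : fsym 0 = 0)
    (hdf : fderiv ℂ fsym 0 = 0) (C : ℝ) (hC : 0 < C) :
    ∃ u : (Fin n → ℂ) → (Fin n → ℂ),
      AnalyticAt ℂ u 0 ∧ u 0 = 0 ∧
      (∀ᶠ z in nhds 0, u z = C • fsym (z + u z)) ∧
      ∀ v : (Fin n → ℂ) → (Fin n → ℂ), ContinuousAt v 0 → v 0 = 0 →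
        (∀ᶠ z in nhds 0, v z = C • fsym (z + v z)) → v =ᶠ[nhds 0] u :=
  stmt_18_general n fsym hf hf0 hdf C
end
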